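/- arXiv:1710.01268 — 5 statements merged into one kernel-verified Lean document; each statement's English description precedes it below -/
import Mathlib

section
/- Let d > 0 and let f : (0,d) → ℝ satisfy 0 < f(x) < x for all x ∈ (0,d). Let α > 0 be such that for every ε > 0 one has lim_{x→0⁺} x^{α+ε}/(x − f(x)) = 0. Then for every ε > 0 with α + ε > 1 there exist n₀ ∈ ℕ and d₁ ∈ (0,d] such that for every x ∈ (0,d₁) and every n ≥ n₀ one has 0 < f^{∘n}(x) < x·(1 + (n/2)·x^{α+ε−1})^{−1/(α+ε−1)}. -/
/-!
Put `γ = α + ε - 1`. Near `0` the hypothesis gives `x ^ (γ + 1) ≤ γ (x - f x)`, and Bernoulli's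
inequality for the exponent `-γ` turns this into `x ^ (-γ) + 1 ≤ (f x) ^ (-γ)`. Iterating,
`(f^[n] x) ^ (-γ) ≥ x ^ (-γ) + n > x ^ (-γ) + n / 2` for `n ≥ 1`, and the bound is this inequality
raised to the power `-1/γ`.
-/

open Set Filter Real Topology

lemma add_nat_le_iterate_of_add_one_le {α : Type*} {f : α → α} {s : Set α} (hs : MapsTo f s s)
    {g : α → ℝ} (hg : ∀ x ∈ s, g x + 1 ≤ g (f x)) {x : α} (hx : x ∈ s) (n : ℕ) :
    g x + n ≤ g (f^[n] x) := by
  induction n with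
  | zero => simp
  | succ n ih =>
    rw [Function.iterate_succ_apply']
    push_cast
    linarith [hg _ (hs.iterate n hx)]

lemma one_add_mul_le_one_sub_rpow_neg {v : ℝ} (hv : v < 1) {p : ℝ} (hp : 0 ≤ p) :
    1 + p * v ≤ (1 - v) ^ (-p) := by
  have hlog : log (1 - v) ≤ -v := by linarith [log_le_sub_one_of_pos (sub_pos.mpr hv)]
  rw [rpow_def_of_pos (sub_pos.mpr hv)]
  nlinarith [add_one_le_exp (log (1 - v) * -p)]

lemma rpow_neg_add_one_le_of_rpow_add_one_le {γ x y : ℝ} (hγ : 0 < γ) (hx : 0 < x) (hy : 0 < y)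
    (hxy : x ^ (γ + 1) ≤ γ * (x - y)) :
    x ^ (-γ) + 1 ≤ y ^ (-γ) := by
  set v := x ^ γ / γ
  have hxγ : 0 < x ^ γ := rpow_pos_of_pos hx γ
  have hyv : y ≤ x * (1 - v) := by
    rw [rpow_add_one hx.ne'] at hxy
    have : x * (1 - v) = x - x ^ γ * x / γ := by simp only [v]; field_simp
    rw [this, le_sub_comm, div_le_iff₀ hγ]
    linarith
  have hv : v < 1 := by nlinarith
  calc x ^ (-γ) + 1 = x ^ (-γ) * (1 + γ * v) := by
        rw [mul_div_cancel₀ _ hγ.ne', mul_add, mul_one, rpow_neg hx.le, inv_mul_cancel₀ hxγ.ne']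
    _ ≤ x ^ (-γ) * (1 - v) ^ (-γ) :=
        mul_le_mul_of_nonneg_left (one_add_mul_le_one_sub_rpow_neg hv hγ.le) (by positivity)
    _ = (x * (1 - v)) ^ (-γ) := (mul_rpow hx.le (by linarith)).symm
    _ ≤ y ^ (-γ) := rpow_le_rpow_of_nonpos hy hyv (by linarith)

lemma mul_one_add_mul_rpow_neg_inv {γ x t : ℝ} (hγ : γ ≠ 0) (hx : 0 < x) (ht : 0 ≤ t) :
    x * (1 + t * x ^ γ) ^ (-(1 / γ)) = (x ^ (-γ) + t) ^ (-(1 / γ)) := by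
  have hxγ : 0 < x ^ γ := rpow_pos_of_pos hx γ
  have : x ^ (-γ) + t = x ^ (-γ) * (1 + t * x ^ γ) := by
    rw [mul_add, mul_one, mul_left_comm, rpow_neg hx.le, inv_mul_cancel₀ hxγ.ne', mul_one]
  rw [this, mul_rpow (rpow_nonneg hx.le _) (by positivity), ← rpow_mul hx.le,
    neg_mul_neg, mul_one_div_cancel hγ, rpow_one]

lemma lt_rpow_neg_inv_of_rpow_neg_lt {γ y z : ℝ} (hγ : 0 < γ) (hy : 0 < y) (hz : 0 < z)
    (h : z < y ^ (-γ)) : y < z ^ (-(1 / γ)) := by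
  have hinv : y = (y ^ (-γ)) ^ (-(1 / γ)) := by
    rw [← rpow_mul hy.le, neg_mul_neg, mul_one_div_cancel hγ.ne', rpow_one]
  rw [hinv]
  exact rpow_lt_rpow_of_neg hz h (by simpa using hγ)

theorem stmt0_general (d : ℝ) (hd : 0 < d) (f : ℝ → ℝ)
    (hf : ∀ x ∈ Ioo 0 d, 0 < f x ∧ f x < x)
    (α : ℝ)
    (hlim : ∀ ε > (0 : ℝ),
      Tendsto (fun x => x ^ (α + ε) / (x - f x)) (𝓝[>] 0) (𝓝 0)) :
    ∀ ε > (0 : ℝ), 1 < α + ε →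
      ∃ n₀ : ℕ, ∃ d₁ : ℝ, 0 < d₁ ∧ d₁ ≤ d ∧
        ∀ x ∈ Ioo 0 d₁, ∀ n : ℕ, n₀ ≤ n →
          0 < f^[n] x ∧
          f^[n] x < x * (1 + (n / 2 : ℝ) * x ^ (α + ε - 1)) ^ (-(1 / (α + ε - 1))) := by
  intro ε hε hαε
  set γ := α + ε - 1
  have hγ : 0 < γ := by linarith
  obtain ⟨δ, hδ, hsmall⟩ :=
    (nhdsGT_basis 0).eventually_iff.mp ((hlim ε hε).eventually_lt_const hγ)
  have hf₁ : ∀ x ∈ Ioo 0 (min d δ), 0 < f x ∧ f x < x := fun x hx =>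
    hf x ⟨hx.1, hx.2.trans_le (min_le_left _ _)⟩
  have hmaps : MapsTo f (Ioo 0 (min d δ)) (Ioo 0 (min d δ)) := fun x hx =>
    ⟨(hf₁ x hx).1, (hf₁ x hx).2.trans hx.2⟩
  have hstep : ∀ x ∈ Ioo 0 (min d δ), x ^ (-γ) + 1 ≤ f x ^ (-γ) := by
    intro x hx
    obtain ⟨hfx, hfxx⟩ := hf₁ x hx
    have hquot := hsmall ⟨hx.1, hx.2.trans_le (min_le_right _ _)⟩
    rw [show α + ε = γ + 1 by ring, div_lt_iff₀ (sub_pos.mpr hfxx)] at hquot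
    exact rpow_neg_add_one_le_of_rpow_add_one_le hγ hx.1 hfx hquot.le
  refine ⟨1, min d δ, lt_min hd hδ, min_le_left _ _, fun x hx n hn => ?_⟩
  have hn : (1 : ℝ) ≤ n := by exact_mod_cast hn
  refine ⟨(hmaps.iterate n hx).1, ?_⟩
  rw [mul_one_add_mul_rpow_neg_inv hγ.ne' hx.1 (by positivity)]
  refine lt_rpow_neg_inv_of_rpow_neg_lt hγ (hmaps.iterate n hx).1
    (add_pos_of_pos_of_nonneg (rpow_pos_of_pos hx.1 _) (by positivity)) ?_
  linarith [add_nat_le_iterate_of_add_one_le hmaps hstep hx n]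

/-- If `0 < f x < x` on `(0,d)` and for every `ε > 0` one has
`x^(α+ε)/(x - f x) → 0` as `x → 0⁺`, then for every `ε > 0` with `α + ε > 1`
there are `n₀` and `d₁ ∈ (0,d]` such that
`0 < f^[n] x < x * (1 + (n/2) * x^(α+ε−1))^(−1/(α+ε−1))` for `x ∈ (0,d₁)`, `n ≥ n₀`. -/
theorem stmt0 (d : ℝ) (hd : 0 < d) (f : ℝ → ℝ)
    (hf : ∀ x ∈ Ioo 0 d, 0 < f x ∧ f x < x)
    (α : ℝ) (hα : 0 < α)
    (hlim : ∀ ε > (0 : ℝ),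
      Tendsto (fun x => x ^ (α + ε) / (x - f x)) (𝓝[>] 0) (𝓝 0)) :
    ∀ ε > (0 : ℝ), 1 < α + ε →
      ∃ n₀ : ℕ, ∃ d₁ : ℝ, 0 < d₁ ∧ d₁ ≤ d ∧
        ∀ x ∈ Ioo 0 d₁, ∀ n : ℕ, n₀ ≤ n →
          0 < f^[n] x ∧
          f^[n] x < x * (1 + (n / 2 : ℝ) * x ^ (α + ε - 1)) ^ (-(1 / (α + ε - 1))) :=
  stmt0_general d hd f hf α hlim
end

section
/- Let d > 0, let f : (0,d) → (0,d) satisfy 0 < f(x) < x for all x ∈ (0,d), and let β > 0 be such that f^{∘k}(x) ≤ x·(1 + (k/2)·x^{β})^{−1/β} for all k ∈ ℕ and x ∈ (0,d). Let γ > β, C > 0, and let δ : (0,d) → ℝ satisfy |δ(x)| ≤ C·x^{γ} for all x ∈ (0,d). Then for every x ∈ (0,d) the series ∑_{k=0}^{∞} |δ(f^{∘k}(x))| converges, and the function h(x) := −∑_{k=0}^{∞} δ(f^{∘k}(x)) satisfies h(x) = O(x^{γ−β}) as x → 0⁺. -/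
/-!
Along an orbit the iterate estimate gives `|δ (f^[k] x)| ≤ C x^γ (1 + k x^β / 2)^(-γ/β)`, and since
`γ/β > 1` the sum of these bounds over `k` is at most `1 + 2 / ((γ/β - 1) x^β)` times `C x^γ`:
the tail is compared with `∫ (1 + u x^β / 2)^(-γ/β) du` through a telescoping sum. Multiplying out
gives `O(x^γ + x^(γ-β)) = O(x^(γ-β))` near `0`.
-/

open Set Real Finset

namespace Real

lemma one_add_mul_one_sub_inv_le_rpow {r q : ℝ} (hr : 0 < r) (hq : 0 ≤ q) :
    1 + q * (1 - r⁻¹) ≤ r ^ q :=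
  calc 1 + q * (1 - r⁻¹) ≤ q * log r + 1 := by
        nlinarith [one_sub_inv_le_log_of_pos hr]
    _ ≤ exp (q * log r) := add_one_le_exp _
    _ = r ^ q := by rw [rpow_def_of_pos hr, mul_comm]

/-- The tangent line of `u ↦ u^(-q)` at `b` lies below its graph. -/
lemma mul_sub_mul_rpow_neg_le {a b q : ℝ} (ha : 0 < a) (hb : 0 < b) (hq : 0 ≤ q) :
    q * (b - a) * b ^ (-(q + 1)) ≤ a ^ (-q) - b ^ (-q) := by
  have hbern := one_add_mul_one_sub_inv_le_rpow (div_pos hb ha) hq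
  have ha' : a ^ (-q) = (b / a) ^ q * b ^ (-q) := by
    rw [div_rpow hb.le ha.le, rpow_neg ha.le, rpow_neg hb.le]
    field_simp
  have hb' : b ^ (-(q + 1)) = b ^ (-q) / b := by
    rw [neg_add, rpow_add hb, rpow_neg_one, div_eq_mul_inv]
  have hbq : 0 ≤ b ^ (-q) := rpow_nonneg hb.le _
  calc q * (b - a) * b ^ (-(q + 1)) = q * (1 - (b / a)⁻¹) * b ^ (-q) := by
        rw [hb', inv_div]; field_simp
    _ ≤ ((b / a) ^ q - 1) * b ^ (-q) := by gcongr; linarith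
    _ = a ^ (-q) - b ^ (-q) := by rw [ha']; ring

lemma sum_range_rpow_neg_le {a s q : ℝ} (ha : 0 < a) (hs : 0 < s) (hq : 0 < q) (n : ℕ) :
    ∑ k ∈ range n, (a + k * s) ^ (-(q + 1)) ≤ a ^ (-(q + 1)) + a ^ (-q) / (q * s) := by
  set u : ℕ → ℝ := fun k ↦ a + k * s
  have hu : ∀ k, 0 < u k := fun k ↦ by positivity
  have htail : ∑ k ∈ range n, u (k + 1) ^ (-(q + 1)) ≤ a ^ (-q) / (q * s) := by
    rw [le_div_iff₀' (by positivity), mul_sum]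
    calc ∑ k ∈ range n, q * s * u (k + 1) ^ (-(q + 1))
        ≤ ∑ k ∈ range n, (u k ^ (-q) - u (k + 1) ^ (-q)) := by
          refine sum_le_sum fun k _ ↦ ?_
          have hstep : u (k + 1) - u k = s := by simp only [u]; push_cast; ring
          simpa only [hstep] using mul_sub_mul_rpow_neg_le (hu k) (hu (k + 1)) hq.le
      _ = a ^ (-q) - u n ^ (-q) := by rw [sum_range_sub']; simp [u]
      _ ≤ a ^ (-q) := by linarith [rpow_nonneg (hu n).le (-q)]
  calc ∑ k ∈ range n, u k ^ (-(q + 1)) ≤ ∑ k ∈ range (n + 1), u k ^ (-(q + 1)) :=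
        sum_le_sum_of_subset_of_nonneg (range_subset_range.2 n.le_succ)
          fun k _ _ ↦ rpow_nonneg (hu k).le _
    _ ≤ a ^ (-(q + 1)) + a ^ (-q) / (q * s) := by
        have hu₀ : u 0 = a := by simp [u]
        rw [sum_range_succ', hu₀]; linarith

lemma rpow_mul_one_add_div_rpow_le {x β γ : ℝ} (c : ℝ) (hx₀ : 0 < x) (hx₁ : x ≤ 1)
    (hβ : 0 ≤ β) : x ^ γ * (1 + c / x ^ β) ≤ (1 + c) * x ^ (γ - β) := by
  have hsplit : x ^ γ * (1 + c / x ^ β) = x ^ γ + c * x ^ (γ - β) := by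
    rw [rpow_sub hx₀]; ring
  have hmono : x ^ γ ≤ x ^ (γ - β) := rpow_le_rpow_of_exponent_ge hx₀ hx₁ (by linarith)
  rw [hsplit]; linarith

end Real

section Orbit

variable {d β γ C : ℝ} {f δ : ℝ → ℝ}

lemma abs_apply_iterate_le (hmaps : MapsTo f (Ioo 0 d) (Ioo 0 d))
    (hiter : ∀ k : ℕ, ∀ x ∈ Ioo 0 d,
      f^[k] x ≤ x * (1 + (k / 2 : ℝ) * x ^ β) ^ (-(1 / β)))
    (hγ : 0 ≤ γ) (hC : 0 ≤ C) (hδ : ∀ x ∈ Ioo 0 d, |δ x| ≤ C * x ^ γ)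
    {x : ℝ} (hx : x ∈ Ioo 0 d) (k : ℕ) :
    |δ (f^[k] x)| ≤ C * x ^ γ * (1 + k * (x ^ β / 2)) ^ (-(γ / β)) := by
  have hk := hmaps.iterate k hx
  have hu : 0 ≤ 1 + k * (x ^ β / 2) := by have := hx.1; positivity
  have hiter' : f^[k] x ≤ x * (1 + k * (x ^ β / 2)) ^ (-(1 / β)) := by
    convert hiter k x hx using 4; ring
  calc |δ (f^[k] x)| ≤ C * (f^[k] x) ^ γ := hδ _ hk
    _ ≤ C * (x * (1 + k * (x ^ β / 2)) ^ (-(1 / β))) ^ γ := by gcongr; exact hk.1.le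
    _ = C * x ^ γ * (1 + k * (x ^ β / 2)) ^ (-(γ / β)) := by
        rw [mul_rpow hx.1.le (rpow_nonneg hu _), ← rpow_mul hu]; ring_nf

lemma sum_range_abs_apply_iterate_le (hmaps : MapsTo f (Ioo 0 d) (Ioo 0 d)) (hβ : 0 < β)
    (hiter : ∀ k : ℕ, ∀ x ∈ Ioo 0 d,
      f^[k] x ≤ x * (1 + (k / 2 : ℝ) * x ^ β) ^ (-(1 / β)))
    (hγ : β < γ) (hC : 0 ≤ C) (hδ : ∀ x ∈ Ioo 0 d, |δ x| ≤ C * x ^ γ)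
    {x : ℝ} (hx : x ∈ Ioo 0 d) (n : ℕ) :
    ∑ k ∈ range n, |δ (f^[k] x)| ≤ C * x ^ γ * (1 + 2 / (γ / β - 1) / x ^ β) := by
  have hq : 0 < γ / β - 1 := by rw [sub_pos, one_lt_div hβ]; exact hγ
  have hxβ : 0 < x ^ β := rpow_pos_of_pos hx.1 β
  have hsum := sum_range_rpow_neg_le one_pos (half_pos hxβ) hq n
  rw [sub_add_cancel, one_rpow, one_rpow] at hsum
  calc ∑ k ∈ range n, |δ (f^[k] x)|
      ≤ ∑ k ∈ range n, C * x ^ γ * (1 + k * (x ^ β / 2)) ^ (-(γ / β)) :=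
        sum_le_sum fun k _ ↦ abs_apply_iterate_le hmaps hiter (hβ.trans hγ).le hC hδ hx k
    _ ≤ C * x ^ γ * (1 + 1 / ((γ / β - 1) * (x ^ β / 2))) := by
        have := hx.1
        rw [← mul_sum]; gcongr
    _ = C * x ^ γ * (1 + 2 / (γ / β - 1) / x ^ β) := by field_simp

end Orbit

theorem stmt1_general (d : ℝ) (hd : 0 < d) (f : ℝ → ℝ)
    (hmaps : MapsTo f (Ioo 0 d) (Ioo 0 d))
    (β : ℝ) (hβ : 0 < β)
    (hiter : ∀ k : ℕ, ∀ x ∈ Ioo 0 d,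
      f^[k] x ≤ x * (1 + (k / 2 : ℝ) * x ^ β) ^ (-(1 / β)))
    (γ : ℝ) (hγ : β < γ) (C : ℝ) (hC : 0 < C)
    (δ : ℝ → ℝ) (hδ : ∀ x ∈ Ioo 0 d, |δ x| ≤ C * x ^ γ) :
    (∀ x ∈ Ioo 0 d, Summable fun k : ℕ => |δ (f^[k] x)|) ∧
    ∃ M > (0 : ℝ), ∃ d' : ℝ, 0 < d' ∧ d' ≤ d ∧
      ∀ x ∈ Ioo 0 d', |-∑' k : ℕ, δ (f^[k] x)| ≤ M * x ^ (γ - β) := by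
  have hpartial : ∀ x ∈ Ioo 0 d, ∀ n, ∑ k ∈ range n, |δ (f^[k] x)| ≤
      C * x ^ γ * (1 + 2 / (γ / β - 1) / x ^ β) := fun x hx ↦
    sum_range_abs_apply_iterate_le hmaps hβ hiter hγ hC.le hδ hx
  have hsumm : ∀ x ∈ Ioo 0 d, Summable fun k : ℕ => |δ (f^[k] x)| := fun x hx ↦
    summable_of_sum_range_le (fun _ ↦ abs_nonneg _) (hpartial x hx)
  have hq : 0 < γ / β - 1 := by rw [sub_pos, one_lt_div hβ]; exact hγ
  refine ⟨hsumm, C * (1 + 2 / (γ / β - 1)), by positivity, min d 1, lt_min hd one_pos,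
    min_le_left d 1, fun x hx ↦ ?_⟩
  have hxd : x ∈ Ioo 0 d := ⟨hx.1, hx.2.trans_le (min_le_left d 1)⟩
  have hx₁ : x ≤ 1 := (hx.2.trans_le (min_le_right d 1)).le
  calc |-∑' k : ℕ, δ (f^[k] x)| ≤ ∑' k : ℕ, |δ (f^[k] x)| := by
        have hsx : Summable fun k ↦ ‖δ (f^[k] x)‖ := hsumm x hxd
        simpa only [abs_neg, norm_eq_abs] using norm_tsum_le_tsum_norm hsx
    _ ≤ C * (x ^ γ * (1 + 2 / (γ / β - 1) / x ^ β)) := by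
        rw [← mul_assoc]
        exact tsum_le_of_sum_range_le (fun _ ↦ abs_nonneg _) (hpartial x hxd)
    _ ≤ C * ((1 + 2 / (γ / β - 1)) * x ^ (γ - β)) :=
        mul_le_mul_of_nonneg_left (rpow_mul_one_add_div_rpow_le _ hx.1 hx₁ hβ.le) hC.le
    _ = C * (1 + 2 / (γ / β - 1)) * x ^ (γ - β) := by ring

/-- under the iterate estimate `f^[k] x ≤ x (1 + (k/2) x^β)^(−1/β)` and the
bound `|δ x| ≤ C x^γ` with `γ > β`, the series `∑ |δ(f^[k] x)|` converges on `(0,d)` and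
`h(x) = −∑ δ(f^[k] x)` is `O(x^(γ−β))` as `x → 0⁺`. -/
theorem stmt1 (d : ℝ) (hd : 0 < d) (f : ℝ → ℝ)
    (hmaps : MapsTo f (Ioo 0 d) (Ioo 0 d))
    (hf : ∀ x ∈ Ioo 0 d, 0 < f x ∧ f x < x)
    (β : ℝ) (hβ : 0 < β)
    (hiter : ∀ k : ℕ, ∀ x ∈ Ioo 0 d,
      f^[k] x ≤ x * (1 + (k / 2 : ℝ) * x ^ β) ^ (-(1 / β)))
    (γ : ℝ) (hγ : β < γ) (C : ℝ) (hC : 0 < C)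
    (δ : ℝ → ℝ) (hδ : ∀ x ∈ Ioo 0 d, |δ x| ≤ C * x ^ γ) :
    (∀ x ∈ Ioo 0 d, Summable fun k : ℕ => |δ (f^[k] x)|) ∧
    ∃ M > (0 : ℝ), ∃ d' : ℝ, 0 < d' ∧ d' ≤ d ∧
      ∀ x ∈ Ioo 0 d', |-∑' k : ℕ, δ (f^[k] x)| ≤ M * x ^ (γ - β) :=
  stmt1_general d hd f hmaps β hβ hiter γ hγ C hC δ hδ
end

section
/- Let d > 0 and let f : (0,d) → ℝ be analytic with f(x) → 0 as x → 0⁺ and 0 < f(x) < x for all x ∈ (0,d). Suppose there exists a strictly monotone, continuous (analytic) function Ψ : (0,d) → ℝ with Ψ(f(x)) − Ψ(x) = 1 for all x ∈ (0,d). Then: (i) Ψ is strictly decreasing; (ii) for every x ∈ (0,d) and every t ∈ [0,∞) there exists a unique y ∈ (0,d) with Ψ(y) = Ψ(x) + t; (iii) writing f^t(x) for this unique y, the family satisfies f^0 = id, f^{t+s}(x) = f^t(f^s(x)) for all s,t ≥ 0 and x ∈ (0,d), and f^1 = f. -/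
open Set Filter Topology

/-- STATEMENT 5: if `f` is analytic on `(0,d)`, `f(x) → 0` as `x → 0⁺`, `0 < f x < x`, and
`Ψ` is a strictly monotone continuous (analytic) Fatou coordinate (`Ψ(f x) − Ψ x = 1`),
then: (i) `Ψ` is strictly decreasing; (ii) for every `x ∈ (0,d)` and `t ≥ 0` there is a
unique `y ∈ (0,d)` with `Ψ y = Ψ x + t`; (iii) the family `f^t` so defined is a semiflow
with `f^0 = id`, `f^{t+s} = f^t ∘ f^s` and `f^1 = f`. -/
theorem stmt5 (d : ℝ) (hd : 0 < d) (f : ℝ → ℝ)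
    (hfan : AnalyticOnNhd ℝ f (Ioo 0 d))
    (hf0 : Tendsto f (𝓝[>] 0) (𝓝 0))
    (hf : ∀ x ∈ Ioo 0 d, 0 < f x ∧ f x < x)
    (Ψ : ℝ → ℝ)
    (hΨan : AnalyticOnNhd ℝ Ψ (Ioo 0 d))
    (hΨcont : ContinuousOn Ψ (Ioo 0 d))
    (hΨmono : StrictMonoOn Ψ (Ioo 0 d) ∨ StrictAntiOn Ψ (Ioo 0 d))
    (habel : ∀ x ∈ Ioo 0 d, Ψ (f x) - Ψ x = 1) :
    StrictAntiOn Ψ (Ioo 0 d) ∧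
    (∀ x ∈ Ioo 0 d, ∀ t : ℝ, 0 ≤ t → ∃! y, y ∈ Ioo 0 d ∧ Ψ y = Ψ x + t) ∧
    ∃ F : ℝ → ℝ → ℝ,
      (∀ t : ℝ, 0 ≤ t → ∀ x ∈ Ioo 0 d, F t x ∈ Ioo 0 d ∧ Ψ (F t x) = Ψ x + t) ∧
      (∀ x ∈ Ioo 0 d, F 0 x = x) ∧
      (∀ s t : ℝ, 0 ≤ s → 0 ≤ t → ∀ x ∈ Ioo 0 d, F (t + s) x = F t (F s x)) ∧
      (∀ x ∈ Ioo 0 d, F 1 x = f x) := by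
  -- f maps Ioo 0 d into itself
  have hmem : ∀ x ∈ Ioo 0 d, f x ∈ Ioo 0 d := by
    intro x hx
    exact ⟨(hf x hx).1, lt_trans (hf x hx).2 hx.2⟩
  -- Ψ is strictly antitone
  have hanti : StrictAntiOn Ψ (Ioo 0 d) := by
    rcases hΨmono with hmono | hanti
    · exfalso
      have hx : (d/2) ∈ Ioo 0 d := ⟨by linarith, by linarith⟩
      have h1 := habel _ hx
      have h2 : Ψ (f (d/2)) < Ψ (d/2) :=
        hmono (hmem _ hx) hx (hf _ hx).2
      linarith
    · exact hanti
  -- iterates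
  have hiter : ∀ n : ℕ, ∀ x ∈ Ioo 0 d,
      f^[n] x ∈ Ioo 0 d ∧ f^[n] x ≤ x ∧ Ψ (f^[n] x) = Ψ x + n := by
    intro n
    induction n with
    | zero => intro x hx; simp [hx]
    | succ n ih =>
      intro x hx
      obtain ⟨h1, h2, h3⟩ := ih x hx
      rw [Function.iterate_succ_apply']
      refine ⟨hmem _ h1, le_trans (hf _ h1).2.le h2, ?_⟩
      have := habel _ h1
      push_cast
      linarith
  -- uniqueness of solutions
  have hexu : ∀ x ∈ Ioo 0 d, ∀ t : ℝ, 0 ≤ t → ∃! y, y ∈ Ioo 0 d ∧ Ψ y = Ψ x + t := by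
    intro x hx t ht
    obtain ⟨n, hn⟩ := exists_nat_ge t
    obtain ⟨h1, h2, h3⟩ := hiter n x hx
    have hsub : Icc (f^[n] x) x ⊆ Ioo 0 d := fun y hy =>
      ⟨lt_of_lt_of_le h1.1 hy.1, lt_of_le_of_lt hy.2 hx.2⟩
    have hIVT := intermediate_value_Icc' h2 (hΨcont.mono hsub)
    have hval : Ψ x + t ∈ Icc (Ψ x) (Ψ (f^[n] x)) := by
      rw [h3]; constructor <;> linarith
    obtain ⟨y, hy, hΨy⟩ := hIVT hval
    refine ⟨y, ⟨hsub hy, hΨy⟩, ?_⟩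
    rintro z ⟨hz, hΨz⟩
    exact hanti.injOn hz (hsub hy) (by rw [hΨz, hΨy])
  refine ⟨hanti, hexu, ?_⟩
  classical
  set G : ℝ → ℝ → ℝ := fun t x => if h : 0 ≤ t ∧ x ∈ Ioo 0 d then (hexu x h.2 t h.1).exists.choose else x with hGdef
  have hG : ∀ t : ℝ, 0 ≤ t → ∀ x ∈ Ioo 0 d, G t x ∈ Ioo 0 d ∧ Ψ (G t x) = Ψ x + t := by
    intro t ht x hx
    rw [hGdef]
    dsimp only
    rw [dif_pos ⟨ht, hx⟩]
    exact (hexu x hx t ht).exists.choose_spec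
  refine ⟨G, hG, ?_, ?_, ?_⟩
  · intro x hx
    exact (hexu x hx 0 le_rfl).unique (hG 0 le_rfl x hx) ⟨hx, by ring⟩
  · intro s t hs ht x hx
    have hGs := hG s hs x hx
    have hGt := hG t ht _ hGs.1
    refine (hexu x hx (t + s) (by linarith)).unique (hG (t + s) (by linarith) x hx)
      ⟨hGt.1, by rw [hGt.2, hGs.2]; ring⟩
  · intro x hx
    exact (hexu x hx 1 zero_le_one).unique (hG 1 zero_le_one x hx)
      ⟨hmem _ hx, by have := habel _ hx; linarith⟩
end

section
/- Let 0 < α ≤ π/4 and R > 0, and let W := {w ∈ ℂ : |w| > R and |arg w| < α}. Let f : W → ℂ satisfy |f(w) − w − 1| ≤ sin α for all w ∈ W. Then: (i) f(W) ⊆ W, so all iterates f^{∘n} are defined on W; (ii) |f^{∘n}(w) − w − n| ≤ n·sin α for all n ∈ ℕ and w ∈ W; (iii) |f^{∘n}(w)| ≥ (1 − sin α)·n for all n ≥ 1 and w ∈ W. -/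
/-!
The disc of radius `sin α` about `1` lies in the closed sector `|arg| ≤ α`, so a step
`w ↦ w + 1 + h` adds to `w` a vector of a convex cone and keeps it in the open sector. For
`α ≤ π/4` we have `re w ≥ ‖w‖ cos α ≥ ‖w‖ sin α`, whence `‖w + 1‖ > ‖w‖ + sin α` and the step
also increases `‖w‖`; so the sector `W` is invariant. Along an orbit the errors `f w - w - 1`
then add up to at most `n sin α`, and since `re w ≥ 0` this gives `‖fⁿ w‖ ≥ n - n sin α`.
-/

open Set Complex

open scoped Real

lemma abs_im_mul_cos_lt_re_mul_sin_iff {α : ℝ} (hα₀ : 0 < α) (hαπ : α < π) {z : ℂ} :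
    |z.im| * Real.cos α < z.re * Real.sin α ↔ z ≠ 0 ∧ |arg z| < α := by
  rcases eq_or_ne z 0 with rfl | hz
  · simp
  have hθ := abs_arg_le_pi z
  have hpolar : |z.im| * Real.cos α < z.re * Real.sin α ↔ 0 < Real.sin (α - |arg z|) := by
    rw [← norm_mul_sin_arg, ← norm_mul_cos_arg, abs_mul, abs_norm,
      Real.abs_sin_eq_sin_abs_of_abs_le_pi hθ, ← Real.cos_abs (arg z), Real.sin_sub, sub_pos,
      mul_assoc, mul_assoc, mul_lt_mul_iff_right₀ (norm_pos_iff.mpr hz),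
      mul_comm (Real.sin |arg z|), mul_comm (Real.cos |arg z|)]
  rw [hpolar, and_iff_right hz]
  -- `α - |arg z| ∈ (-π, π)`, where `sin` has the sign of its argument
  constructor
  · intro h
    by_contra! hle
    exact h.not_ge (Real.sin_nonpos_of_nonpos_of_neg_pi_le (by linarith) (by linarith))
  · intro h
    exact Real.sin_pos_of_pos_of_lt_pi (by linarith) (by linarith [abs_nonneg (arg z)])

lemma abs_im_mul_cos_sub_re_mul_sin_le_norm (h : ℂ) (α : ℝ) :
    |h.im| * Real.cos α - h.re * Real.sin α ≤ ‖h‖ := by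
  have hnorm : ‖h‖ ^ 2 = h.re ^ 2 + |h.im| ^ 2 := by
    rw [sq_abs, Complex.sq_norm, normSq_apply]; ring
  nlinarith [sq_nonneg (|h.im| * Real.sin α + h.re * Real.cos α), Real.sin_sq_add_cos_sq α,
    norm_nonneg h]

lemma abs_arg_add_one_add_lt {α : ℝ} (hα₀ : 0 < α) (hα : α ≤ π / 2) {w h : ℂ} (hw : w ≠ 0)
    (hwα : |arg w| < α) (hh : ‖h‖ ≤ Real.sin α) : |arg (w + 1 + h)| < α := by
  have hαπ : α < π := by linarith [Real.pi_pos]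
  have hcos : 0 ≤ Real.cos α := Real.cos_nonneg_of_neg_pi_div_two_le_of_le (by linarith) hα
  have hw' := (abs_im_mul_cos_lt_re_mul_sin_iff hα₀ hαπ).mpr ⟨hw, hwα⟩
  have hh' := abs_im_mul_cos_sub_re_mul_sin_le_norm h α
  refine ((abs_im_mul_cos_lt_re_mul_sin_iff hα₀ hαπ).mp ?_).2
  have him : |(w + 1 + h).im| ≤ |w.im| + |h.im| := by simpa using abs_add_le w.im h.im
  calc |(w + 1 + h).im| * Real.cos α ≤ (|w.im| + |h.im|) * Real.cos α := by gcongr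
    _ < (w + 1 + h).re * Real.sin α := by simp only [add_re, one_re]; linarith

lemma norm_lt_norm_add_one_add {α : ℝ} (hα : α ≤ π / 4) {w h : ℂ} (hwα : |arg w| < α)
    (hh : ‖h‖ ≤ Real.sin α) : ‖w‖ < ‖w + 1 + h‖ := by
  have hα₀ : 0 < α := (abs_nonneg _).trans_lt hwα
  have hsin_le_cos : Real.sin α ≤ Real.cos α := by
    rw [← Real.cos_pi_div_two_sub]
    exact Real.cos_le_cos_of_nonneg_of_le_pi hα₀.le (by linarith [Real.pi_pos]) (by linarith)
  have hsin_lt_one : Real.sin α < 1 := by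
    nlinarith [Real.sin_sq_add_cos_sq α, Real.cos_le_one α]
  have hcos_le : Real.cos α ≤ Real.cos (arg w) := by
    rw [← Real.cos_abs (arg w)]
    exact Real.cos_le_cos_of_nonneg_of_le_pi (abs_nonneg _) (by linarith [Real.pi_pos]) hwα.le
  have hre : ‖w‖ * Real.cos α ≤ w.re := by
    rw [← norm_mul_cos_arg]; exact mul_le_mul_of_nonneg_left hcos_le (norm_nonneg w)
  have hsq : ‖w + 1‖ ^ 2 = ‖w‖ ^ 2 + 2 * w.re + 1 := by
    simp only [Complex.sq_norm, normSq_add, map_one, mul_one]; ring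
  have hw1 : ‖w‖ + Real.sin α < ‖w + 1‖ := by
    have hsin₀ : 0 ≤ Real.sin α := (norm_nonneg h).trans hh
    refine lt_of_pow_lt_pow_left₀ 2 (norm_nonneg _) ?_
    rw [hsq]
    nlinarith [mul_le_mul_of_nonneg_left hsin_le_cos (norm_nonneg w)]
  calc ‖w‖ < ‖w + 1‖ - ‖h‖ := by linarith
    _ ≤ ‖w + 1 + h‖ := by simpa using norm_sub_norm_le (w + 1) (-h)

def sector (α R : ℝ) : Set ℂ := {w : ℂ | R < ‖w‖ ∧ |arg w| < α}

lemma mapsTo_sector {α R : ℝ} (hα : α ≤ π / 4) (hR : 0 ≤ R) {f : ℂ → ℂ}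
    (hf : ∀ w ∈ sector α R, ‖f w - w - 1‖ ≤ Real.sin α) : MapsTo f (sector α R) (sector α R) := by
  rintro w ⟨hwR, hwα⟩
  have hα₀ : 0 < α := (abs_nonneg _).trans_lt hwα
  have hw : w ≠ 0 := norm_pos_iff.mp (hR.trans_lt hwR)
  obtain ⟨h, hh, hfw⟩ : ∃ h, ‖h‖ ≤ Real.sin α ∧ w + 1 + h = f w :=
    ⟨f w - w - 1, hf w ⟨hwR, hwα⟩, by ring⟩
  rw [← hfw]
  exact ⟨hwR.trans (norm_lt_norm_add_one_add hα hwα hh),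
    abs_arg_add_one_add_lt hα₀ (by linarith [Real.pi_pos]) hw hwα hh⟩

lemma norm_iterate_sub_sub_nsmul_le {E : Type*} [SeminormedAddCommGroup E] {f : E → E}
    {s : Set E} {c : E} {δ : ℝ} (hs : MapsTo f s s) (hf : ∀ x ∈ s, ‖f x - x - c‖ ≤ δ)
    (n : ℕ) {x : E} (hx : x ∈ s) : ‖f^[n] x - x - n • c‖ ≤ n * δ := by
  induction n with
  | zero => simp
  | succ n ih =>
    calc ‖f^[n + 1] x - x - (n + 1) • c‖
        = ‖(f (f^[n] x) - f^[n] x - c) + (f^[n] x - x - n • c)‖ := by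
          rw [Function.iterate_succ_apply', succ_nsmul]; abel_nf
      _ ≤ δ + n * δ := (norm_add_le _ _).trans (add_le_add (hf _ (hs.iterate n hx)) ih)
      _ = (n + 1 : ℕ) * δ := by push_cast; ring

lemma one_sub_mul_le_norm_of_norm_sub_sub_natCast_le {z w : ℂ} {n : ℕ} {s : ℝ} (hw : 0 ≤ w.re)
    (h : ‖z - w - n‖ ≤ n * s) : (1 - s) * n ≤ ‖z‖ := by
  have hn : (n : ℝ) ≤ ‖w + n‖ := le_trans (by simpa using hw) (re_le_norm _)
  have htri : ‖w + n‖ ≤ ‖z‖ + ‖z - w - n‖ := by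
    simpa [sub_sub, norm_sub_rev] using norm_le_norm_add_norm_sub' (w + n) z
  linarith

theorem stmt12_general (α R : ℝ) (hαle : α ≤ Real.pi / 4) (hR : 0 < R)
    (f : ℂ → ℂ)
    (hf : ∀ w : ℂ, R < ‖w‖ → |Complex.arg w| < α →
      ‖f w - w - 1‖ ≤ Real.sin α) :
    (MapsTo f {w : ℂ | R < ‖w‖ ∧ |Complex.arg w| < α}
      {w : ℂ | R < ‖w‖ ∧ |Complex.arg w| < α}) ∧
    (∀ n : ℕ, ∀ w : ℂ, R < ‖w‖ → |Complex.arg w| < α →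
      ‖f^[n] w - w - (n : ℂ)‖ ≤ (n : ℝ) * Real.sin α) ∧
    (∀ n : ℕ, 1 ≤ n → ∀ w : ℂ, R < ‖w‖ → |Complex.arg w| < α →
      (1 - Real.sin α) * (n : ℝ) ≤ ‖f^[n] w‖) := by
  have hf' : ∀ w ∈ sector α R, ‖f w - w - 1‖ ≤ Real.sin α := fun w hw ↦ hf w hw.1 hw.2
  have hmaps : MapsTo f (sector α R) (sector α R) := mapsTo_sector hαle hR.le hf'
  have hdrift : ∀ n : ℕ, ∀ w : ℂ, R < ‖w‖ → |Complex.arg w| < α →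
      ‖f^[n] w - w - (n : ℂ)‖ ≤ (n : ℝ) * Real.sin α := fun n w hwR hwα ↦ by
    simpa using norm_iterate_sub_sub_nsmul_le hmaps hf' n ⟨hwR, hwα⟩
  refine ⟨hmaps, hdrift, fun n _ w hwR hwα ↦ ?_⟩
  have hre : 0 ≤ w.re := abs_arg_le_pi_div_two_iff.mp (by linarith [Real.pi_pos])
  exact one_sub_mul_le_norm_of_norm_sub_sub_natCast_le hre (hdrift n w hwR hwα)

/-- STATEMENT 12: let `0 < α ≤ π/4`, `R > 0` and let `W` be the sector
`{w : |w| > R, |arg w| < α}`.  If `f : W → ℂ` satisfies `|f w − w − 1| ≤ sin α` on `W`,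
then (i) `W` is `f`-invariant; (ii) `|f^[n] w − w − n| ≤ n sin α` on `W`;
(iii) `|f^[n] w| ≥ (1 − sin α) n` for `n ≥ 1` and `w ∈ W`. -/
theorem stmt12 (α R : ℝ) (hα : 0 < α) (hαle : α ≤ Real.pi / 4) (hR : 0 < R)
    (f : ℂ → ℂ)
    (hf : ∀ w : ℂ, R < ‖w‖ → |Complex.arg w| < α →
      ‖f w - w - 1‖ ≤ Real.sin α) :
    (MapsTo f {w : ℂ | R < ‖w‖ ∧ |Complex.arg w| < α}
      {w : ℂ | R < ‖w‖ ∧ |Complex.arg w| < α}) ∧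
    (∀ n : ℕ, ∀ w : ℂ, R < ‖w‖ → |Complex.arg w| < α →
      ‖f^[n] w - w - (n : ℂ)‖ ≤ (n : ℝ) * Real.sin α) ∧
    (∀ n : ℕ, 1 ≤ n → ∀ w : ℂ, R < ‖w‖ → |Complex.arg w| < α →
      (1 - Real.sin α) * (n : ℝ) ≤ ‖f^[n] w‖) :=
  stmt12_general α R hαle hR f hf
end

section
/- Let n₀ ∈ ℤ, δ > 0, let R : (0,δ) → ℝ be continuous, and let (r_n)_{n ≥ n₀} be real numbers such that for every integer N ≥ n₀ one has R(y) − ∑_{n=n₀}^{N} r_n yⁿ = o(y^{N}) as y → 0⁺. Let α < 0 and fix d₀ ∈ (0, e^{−1/δ}). Then the function f(y) := e^{α/y}·∫_{e^{−1/y}}^{d₀} s^{α−1}·R(−1/log s) ds, defined for all sufficiently small y > 0, admits a power asymptotic expansion at 0⁺: there exists a sequence (a_n)_{n ≥ n₀} of reals such that for every integer N ≥ n₀, f(y) − ∑_{n=n₀}^{N} a_n yⁿ = o(y^{N}) as y → 0⁺. -/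
/-!
Substituting `s = e^{-1/t}` turns the integral into `∫_y^{y₀} e^{-α/t} R(t) t⁻² dt` with
`y₀ = -1/log d₀`, so `f` solves the linear ODE `y² f' + α f = -R`. The candidate coefficients
`a_n` are those of the formal power series solution. Writing `S_N = ∑_{n ≤ N} a_n yⁿ`, variation
of constants expresses `f - S_N` as `e^{α/y}` times a constant plus
`e^{α/y} ∫_y^{y₀} e^{-α/t} h(t) t⁻² dt`, where `h = R + α S_N + t² S_N'`. By the recurrence
for the `a_n`, `α S_N + t² S_N'` is `-∑_{n ≤ N} r_n tⁿ` up to a multiple of `t^{N+1}`, so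
`h = o(t^N)`.
Since `α < 0`, the factor `e^{α/y}` is flat at `0⁺`, and the kernel estimate
`∫_y^η e^{-α/t} t^{m-2} dt ≤ (2/|α|) e^{-α/y} y^m` (for `η` small) shows that the integral term
is `o(y^N)` as well.
-/

open Set Filter Topology Asymptotics intervalIntegral Real

lemma isLittleO_exp_div_zpow {α : ℝ} (hα : α < 0) (m : ℤ) :
    (fun y : ℝ => exp (α / y)) =o[𝓝[>] 0] (· ^ m) := by
  refine (isLittleO_iff_tendsto' ?_).2 ?_
  · filter_upwards [self_mem_nhdsWithin] with y (hy : 0 < y) h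
    exact absurd h (zpow_ne_zero m hy.ne')
  · refine ((tendsto_rpow_mul_exp_neg_mul_atTop_nhds_zero m (-α) (neg_pos.2 hα)).comp
      tendsto_inv_nhdsGT_zero).congr' ?_
    filter_upwards [self_mem_nhdsWithin] with y (hy : 0 < y)
    simp [Real.rpow_intCast, div_eq_mul_inv, mul_comm]

lemma isLittleO_zpow_add_one (N : ℤ) : (fun t : ℝ => t ^ (N + 1)) =o[𝓝[>] 0] (· ^ N) := by
  have hid : (fun t : ℝ => t) =o[𝓝[>] 0] (fun _ => (1 : ℝ)) :=
    (isLittleO_one_iff ℝ).2 (tendsto_nhdsWithin_of_tendsto_nhds tendsto_id)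
  refine (hid.mul_isBigO (isBigO_refl (· ^ N) _)).congr' ?_ (by simp)
  filter_upwards [self_mem_nhdsWithin] with t (ht : 0 < t)
  rw [zpow_add_one₀ ht.ne', mul_comm]

section Kernel

variable {α y b : ℝ}

lemma continuousOn_exp_neg_div_mul_div_sq {g : ℝ → ℝ} (hy : 0 < y)
    (hg : ContinuousOn g (Icc y b)) :
    ContinuousOn (fun t => exp (-α / t) * g t / t ^ 2) (Icc y b) := by
  have hne : ∀ t ∈ Icc y b, t ≠ 0 := fun t ht => (hy.trans_le ht.1).ne'
  fun_prop (disch := simp_all)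

lemma intervalIntegrable_exp_neg_div_mul_div_sq {g : ℝ → ℝ} (hy : 0 < y) (hyb : y ≤ b)
    (hg : ContinuousOn g (Icc y b)) :
    IntervalIntegrable (fun t => exp (-α / t) * g t / t ^ 2) MeasureTheory.volume y b :=
  (continuousOn_exp_neg_div_mul_div_sq hy hg).intervalIntegrable_of_Icc hyb

lemma hasDerivAt_exp_neg_div_mul {t S' : ℝ} {S : ℝ → ℝ} (hS : HasDerivAt S S' t) (ht : t ≠ 0) :
    HasDerivAt (fun t => exp (-α / t) * S t) (exp (-α / t) * (α * S t + t ^ 2 * S') / t ^ 2) t := by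
  have hinv : HasDerivAt (fun t => -α / t) (α / t ^ 2) t := by
    simpa [div_eq_mul_inv, neg_div] using (hasDerivAt_inv ht).const_mul (-α)
  refine (hinv.exp.mul hS).congr_deriv ?_
  field_simp

lemma integral_exp_neg_div_mul_eq {S S' : ℝ → ℝ} (hy : 0 < y) (hyb : y ≤ b)
    (hS : ∀ t ∈ Icc y b, HasDerivAt S (S' t) t) (hS' : ContinuousOn S' (Icc y b)) :
    ∫ t in y..b, exp (-α / t) * (α * S t + t ^ 2 * S' t) / t ^ 2 =
      exp (-α / b) * S b - exp (-α / y) * S y := by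
  have hScont : ContinuousOn S (Icc y b) := fun t ht => (hS t ht).continuousAt.continuousWithinAt
  refine integral_eq_sub_of_hasDerivAt (f := fun t => exp (-α / t) * S t) (fun t ht => ?_)
    (intervalIntegrable_exp_neg_div_mul_div_sq (g := fun t => α * S t + t ^ 2 * S' t) hy hyb
      (by fun_prop))
  rw [uIcc_of_le hyb] at ht
  exact hasDerivAt_exp_neg_div_mul (hS t ht) (hy.trans_le ht.1).ne'

/-- Variation of constants for `y² f' + α f = -R`. -/
lemma exp_mul_integral_sub_eq {R S S' : ℝ → ℝ} (hy : 0 < y) (hyb : y ≤ b)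
    (hR : ContinuousOn R (Icc y b)) (hS : ∀ t ∈ Icc y b, HasDerivAt S (S' t) t)
    (hS' : ContinuousOn S' (Icc y b)) :
    exp (α / y) * (∫ t in y..b, exp (-α / t) * R t / t ^ 2) - S y =
      exp (α / y) * (∫ t in y..b, exp (-α / t) * (R t + (α * S t + t ^ 2 * S' t)) / t ^ 2) -
        exp (-α / b) * S b * exp (α / y) := by
  have hScont : ContinuousOn S (Icc y b) := fun t ht => (hS t ht).continuousAt.continuousWithinAt
  have hsplit : ∫ t in y..b, exp (-α / t) * (R t + (α * S t + t ^ 2 * S' t)) / t ^ 2 =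
      (∫ t in y..b, exp (-α / t) * R t / t ^ 2) +
        ∫ t in y..b, exp (-α / t) * (α * S t + t ^ 2 * S' t) / t ^ 2 := by
    rw [← integral_add (intervalIntegrable_exp_neg_div_mul_div_sq hy hyb hR)
      (intervalIntegrable_exp_neg_div_mul_div_sq (α := α) hy hyb (by fun_prop))]
    congr 1
    funext t
    ring
  have hinv : exp (α / y) * exp (-α / y) = 1 := by
    rw [← exp_add, neg_div, add_neg_cancel, exp_zero]
  rw [hsplit, integral_exp_neg_div_mul_eq hy hyb hS hS']
  linear_combination S y * hinv

lemma integral_exp_neg_div_mul_zpow_le {m : ℤ} (hα : α < 0) (hy : 0 < y) (hyb : y ≤ b)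
    (hb : |(m : ℝ)| * b ≤ -α / 2) :
    ∫ t in y..b, exp (-α / t) * t ^ m / t ^ 2 ≤ -2 / α * (exp (-α / y) * y ^ m) := by
  have hne : ∀ t ∈ Icc y b, t ≠ 0 := fun t ht => (hy.trans_le ht.1).ne'
  have hderiv : ∀ t ∈ Icc y b, HasDerivAt (fun t => 2 / α * (exp (-α / t) * t ^ m))
      (2 / α * (exp (-α / t) * (α * t ^ m + t ^ 2 * (m * t ^ (m - 1))) / t ^ 2)) t :=
    fun t ht => (hasDerivAt_exp_neg_div_mul (hasDerivAt_zpow m t (.inl (hne t ht)))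
      (hne t ht)).const_mul _
  have hFb : 2 / α * (exp (-α / b) * b ^ m) ≤ 0 :=
    mul_nonpos_of_nonpos_of_nonneg (div_nonpos_of_nonneg_of_nonpos zero_le_two hα.le)
      (by have := hy.trans_le hyb; positivity)
  calc ∫ t in y..b, exp (-α / t) * t ^ m / t ^ 2
      ≤ 2 / α * (exp (-α / b) * b ^ m) - 2 / α * (exp (-α / y) * y ^ m) := by
        refine integral_le_sub_of_hasDeriv_right_of_le hyb
          (fun t ht => (hderiv t ht).continuousAt.continuousWithinAt)
          (fun t ht => (hderiv t (Ioo_subset_Icc_self ht)).hasDerivWithinAt)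
          ((continuousOn_exp_neg_div_mul_div_sq hy (by fun_prop (disch := simp_all))).integrableOn_Icc)
          fun t ht => ?_
        have ht0 : 0 < t := hy.trans ht.1
        have hmt : (m : ℝ) * t ≤ -α / 2 :=
          hb.trans' (by nlinarith [le_abs_self (m : ℝ), abs_nonneg (m : ℝ), ht.2])
        have key : 2 / α * (exp (-α / t) * (α * t ^ m + t ^ 2 * (m * t ^ (m - 1))) / t ^ 2) =
            exp (-α / t) * t ^ m / t ^ 2 +
              exp (-α / t) * t ^ m / t ^ 2 * ((α + 2 * m * t) / α) := by
          rw [zpow_sub_one₀ ht0.ne']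
          field_simp [hα.ne]
          ring
        rw [key, le_add_iff_nonneg_right]
        exact mul_nonneg (by positivity) (div_nonneg_of_nonpos (by linarith) hα.le)
    _ ≤ -2 / α * (exp (-α / y) * y ^ m) := by
        linarith [show -2 / α * (exp (-α / y) * y ^ m) = -(2 / α * (exp (-α / y) * y ^ m)) by ring]

lemma abs_exp_mul_integral_le {ε : ℝ} {m : ℤ} {h : ℝ → ℝ} (hα : α < 0) (hy : 0 < y)
    (hyb : y ≤ b) (hb : |(m : ℝ)| * b ≤ -α / 2) (hcont : ContinuousOn h (Icc y b))
    (hh : ∀ t ∈ Icc y b, |h t| ≤ ε * t ^ m) :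
    |exp (α / y) * ∫ t in y..b, exp (-α / t) * h t / t ^ 2| ≤ ε * (-2 / α) * y ^ m := by
  have hε : 0 ≤ ε := nonneg_of_mul_nonneg_left ((abs_nonneg _).trans (hh y ⟨le_rfl, hyb⟩))
    (zpow_pos hy m)
  have hinv : exp (α / y) * exp (-α / y) = 1 := by
    rw [← exp_add, neg_div, add_neg_cancel, exp_zero]
  calc |exp (α / y) * ∫ t in y..b, exp (-α / t) * h t / t ^ 2|
      = exp (α / y) * |∫ t in y..b, exp (-α / t) * h t / t ^ 2| := by
        rw [abs_mul, abs_of_pos (exp_pos _)]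
    _ ≤ exp (α / y) * ∫ t in y..b, ε * (exp (-α / t) * t ^ m / t ^ 2) := by
        gcongr
        refine (abs_integral_le_integral_abs hyb).trans (integral_mono_on hyb
          (intervalIntegrable_exp_neg_div_mul_div_sq hy hyb hcont).abs
          ((intervalIntegrable_exp_neg_div_mul_div_sq hy hyb
            (by fun_prop (disch := exact fun t ht => .inl (hy.trans_le ht.1).ne'))).const_mul ε)
          fun t ht => ?_)
        have ht0 : 0 < t := hy.trans_le ht.1
        rw [abs_div, abs_mul, abs_of_pos (exp_pos _), abs_of_pos (by positivity : 0 < t ^ 2),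
          ← mul_div_assoc, mul_left_comm]
        gcongr
        exact hh t ht
    _ ≤ exp (α / y) * (ε * (-2 / α * (exp (-α / y) * y ^ m))) := by
        rw [integral_const_mul]
        gcongr
        exact integral_exp_neg_div_mul_zpow_le hα hy hyb hb
    _ = ε * (-2 / α) * y ^ m := by
        linear_combination ε * (-2 / α) * y ^ m * hinv

lemma isLittleO_exp_mul_integral {m : ℤ} {h : ℝ → ℝ} (hα : α < 0) (hb : 0 < b)
    (hcont : ContinuousOn h (Ioc 0 b)) (hh : h =o[𝓝[>] 0] (· ^ m)) :
    (fun y => exp (α / y) * ∫ t in y..b, exp (-α / t) * h t / t ^ 2) =o[𝓝[>] 0] (· ^ m) := by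
  have hα' : 0 < -α := neg_pos.2 hα
  have hcontIcc : ∀ {u v}, 0 < u → v ≤ b → ContinuousOn h (Icc u v) := fun hu hv =>
    hcont.mono fun t ht => ⟨hu.trans_le ht.1, ht.2.trans hv⟩
  refine isLittleO_iff.2 fun c hc => ?_
  have hsmall : ∀ᶠ t in 𝓝[>] 0, |(m : ℝ)| * t ≤ -α / 2 ∧ t ≤ b := by
    have : Tendsto (fun t : ℝ => (|(m : ℝ)| * t, t)) (𝓝[>] 0) (𝓝 (0, 0)) :=
      tendsto_nhdsWithin_of_tendsto_nhds (by
        simpa using ((continuous_const.mul continuous_id).prodMk continuous_id).tendsto (0 : ℝ))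
    exact this.eventually (prod_mem_nhds (Iic_mem_nhds (by linarith)) (Iic_mem_nhds hb))
  obtain ⟨u, hu, hhu⟩ := mem_nhdsGT_iff_exists_Ioo_subset.1
    ((hh.def (by positivity : 0 < c * -α / 4)).and hsmall)
  obtain ⟨-, hηm, hηb⟩ := hhu ⟨half_pos hu, half_lt_self hu⟩
  set η := u / 2
  -- On `(0, η]` the kernel estimate applies; `∫_η^b` is a constant, killed by `e^{α/y}`.
  have hfar := (isLittleO_exp_div_zpow hα m).const_mul_left
    (∫ t in η..b, exp (-α / t) * h t / t ^ 2)
  filter_upwards [hfar.def (half_pos hc), Ioo_mem_nhdsGT (half_pos hu)] with y hfar ⟨hy, hyη⟩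
  have hnear := abs_exp_mul_integral_le (ε := c * -α / 4) hα hy hyη.le
    (hηm.trans' (by gcongr)) (hcontIcc hy hηb) fun t ht => by
      have ht0 : 0 < t := hy.trans_le ht.1
      simpa [abs_of_pos ht0] using (hhu ⟨ht0, ht.2.trans_lt (half_lt_self hu)⟩).1
  rw [← integral_add_adjacent_intervals
    (intervalIntegrable_exp_neg_div_mul_div_sq hy hyη.le (hcontIcc hy hηb))
    (intervalIntegrable_exp_neg_div_mul_div_sq (half_pos hu) hηb (hcontIcc (half_pos hu) le_rfl)),
    mul_add]
  rw [Real.norm_eq_abs, Real.norm_eq_abs, abs_of_pos (zpow_pos hy m), mul_comm] at *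
  calc _ ≤ c * -α / 4 * (-2 / α) * y ^ m + c / 2 * y ^ m := (abs_add_le _ _).trans
        (add_le_add hnear hfar)
    _ = c * y ^ m := by field_simp [hα.ne]; ring

end Kernel

lemma integral_rpow_mul_comp_neg_inv_log {α y b : ℝ} {R : ℝ → ℝ} (hy : 0 < y) (hyb : y ≤ b)
    (hR : ContinuousOn R (Icc y b)) :
    ∫ s in exp (-1 / y)..exp (-1 / b), s ^ (α - 1) * R (-1 / log s) =
      ∫ t in y..b, exp (-α / t) * R t / t ^ 2 := by
  rw [← uIcc_of_le hyb] at hR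
  have hne : ∀ t ∈ uIcc y b, t ≠ 0 := fun t ht => (hy.trans_le (uIcc_of_le hyb ▸ ht).1).ne'
  have hlog : ∀ t ∈ uIcc y b, -1 / log (exp (-1 / t)) = t := fun t ht => by
    rw [log_exp]; field_simp [hne t ht]
  have hderiv : ∀ t ∈ uIcc y b, HasDerivAt (fun t => exp (-1 / t)) (exp (-1 / t) / t ^ 2) t :=
    fun t ht => by simpa [neg_div, ← div_eq_mul_inv] using (hasDerivAt_inv (hne t ht)).neg.exp
  have hg : ContinuousOn (fun s => s ^ (α - 1) * R (-1 / log s))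
      ((fun t => exp (-1 / t)) '' uIcc y b) := by
    refine ContinuousOn.mul (continuousOn_id.rpow_const ?_) (hR.comp ?_ ?_)
    · rintro _ ⟨t, -, rfl⟩
      exact .inl (exp_pos _).ne'
    · rintro _ ⟨t, ht, rfl⟩
      refine (continuousAt_const.div (continuousAt_log (exp_pos _).ne') ?_).continuousWithinAt
      rw [log_exp]
      exact div_ne_zero (by norm_num) (hne t ht)
    · rintro _ ⟨t, ht, rfl⟩
      simpa only [hlog t ht] using ht
  rw [← integral_comp_mul_deriv' hderiv (by fun_prop (disch := simp_all)) hg]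
  refine integral_congr fun t ht => ?_
  calc exp (-1 / t) ^ (α - 1) * R (-1 / log (exp (-1 / t))) * (exp (-1 / t) / t ^ 2)
      = exp (-1 / t * (α - 1) + -1 / t) * R t / t ^ 2 := by
        rw [hlog t ht, exp_add, exp_mul]; ring
    _ = exp (-α / t) * R t / t ^ 2 := by
        congr 3; field_simp [hne t ht]; ring

lemma neg_one_div_log_mem_Ioo {δ d : ℝ} (hδ : 0 < δ) (hd : d ∈ Ioo 0 (exp (-1 / δ))) :
    -1 / log d ∈ Ioo 0 δ := by
  have hlog : log d < -1 / δ := by simpa using log_lt_log hd.1 hd.2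
  have hlog0 : log d < 0 := hlog.trans (div_neg_of_neg_of_pos (by norm_num) hδ)
  refine ⟨div_pos_of_neg_of_neg (by norm_num) hlog0, ?_⟩
  rw [div_lt_iff_of_neg hlog0]
  rw [lt_div_iff₀ hδ] at hlog
  linarith

/-- Coefficients of the formal power series solution `∑ aₙ yⁿ` of `y² f' + α f = -∑ rₙ yⁿ`;
the values below `n₀` are irrelevant. -/
noncomputable def formalCoeff (α : ℝ) (r : ℤ → ℝ) (n₀ n : ℤ) : ℝ :=
  n.inductionOn' n₀ (-r n₀ / α) (fun k _ a => -(r (k + 1) + k * a) / α) fun _ _ _ => 0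

lemma mul_formalCoeff_self {α : ℝ} (hα : α ≠ 0) (r : ℤ → ℝ) (n₀ : ℤ) :
    α * formalCoeff α r n₀ n₀ = -r n₀ := by
  rw [formalCoeff, Int.inductionOn'_self]
  field_simp

lemma mul_formalCoeff_add_one {α : ℝ} (hα : α ≠ 0) (r : ℤ → ℝ) {n₀ n : ℤ} (hn : n₀ ≤ n) :
    α * formalCoeff α r n₀ (n + 1) + n * formalCoeff α r n₀ n = -r (n + 1) := by
  rw [formalCoeff, formalCoeff, Int.inductionOn'_add_one hn]
  field_simp
  ring

lemma sum_mul_add_zpow_eq {α : ℝ} {r a : ℤ → ℝ} {n₀ : ℤ} (h₀ : α * a n₀ = -r n₀)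
    (hsucc : ∀ n, n₀ ≤ n → α * a (n + 1) + n * a n = -r (n + 1)) (t : ℝ) {N : ℤ}
    (hN : n₀ ≤ N) :
    ∑ n ∈ Finset.Icc n₀ N, a n * (α * t ^ n + n * t ^ (n + 1)) =
      -∑ n ∈ Finset.Icc n₀ N, r n * t ^ n + N * a N * t ^ (N + 1) := by
  induction N, hN using Int.leInduction with
  | base =>
    simp only [Finset.Icc_self, Finset.sum_singleton]
    linear_combination t ^ n₀ * h₀
  | succ N hN ih =>
    rw [← Finset.insert_Icc_right_eq_Icc_add_one (by omega),
      Finset.sum_insert (by simp), Finset.sum_insert (by simp), ih]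
    push_cast
    linear_combination t ^ (N + 1) * hsucc N hN

lemma hasDerivAt_sum_zpow (s : Finset ℤ) (a : ℤ → ℝ) {t : ℝ} (ht : t ≠ 0) :
    HasDerivAt (fun t => ∑ n ∈ s, a n * t ^ n) (∑ n ∈ s, a n * (n * t ^ (n - 1))) t :=
  HasDerivAt.fun_sum fun n _ => (hasDerivAt_zpow n t (.inl ht)).const_mul (a n)

lemma formalCoeff_ode {α : ℝ} (hα : α ≠ 0) (r : ℤ → ℝ) {n₀ N : ℤ} (hN : n₀ ≤ N) {t : ℝ}
    (ht : t ≠ 0) :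
    α * ∑ n ∈ Finset.Icc n₀ N, formalCoeff α r n₀ n * t ^ n +
        t ^ 2 * ∑ n ∈ Finset.Icc n₀ N, formalCoeff α r n₀ n * (n * t ^ (n - 1)) =
      -∑ n ∈ Finset.Icc n₀ N, r n * t ^ n + N * formalCoeff α r n₀ N * t ^ (N + 1) := by
  rw [← sum_mul_add_zpow_eq (mul_formalCoeff_self hα r n₀)
    (fun n hn => mul_formalCoeff_add_one hα r hn) t hN, Finset.mul_sum, Finset.mul_sum,
    ← Finset.sum_add_distrib]
  refine Finset.sum_congr rfl fun n _ => ?_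
  rw [zpow_add_one₀ ht, zpow_sub_one₀ ht]
  field_simp

/-- STATEMENT 16: if `R` is continuous on `(0,δ)` and admits the power asymptotic
expansion `∑_{n ≥ n₀} r_n yⁿ` at `0⁺`, `α < 0` and `d₀ ∈ (0, e^{−1/δ})`, then
`f(y) = e^{α/y} ∫_{e^{−1/y}}^{d₀} s^{α−1} R(−1/log s) ds` admits a power asymptotic
expansion `∑_{n ≥ n₀} a_n yⁿ` at `0⁺`. -/
theorem stmt16 (n₀ : ℤ) (δ : ℝ) (hδ : 0 < δ) (R : ℝ → ℝ)
    (hRcont : ContinuousOn R (Ioo 0 δ))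
    (r : ℤ → ℝ)
    (hexp : ∀ N : ℤ, n₀ ≤ N →
      (fun y : ℝ => R y - ∑ n ∈ Finset.Icc n₀ N, r n * y ^ n)
        =o[𝓝[>] 0] fun y : ℝ => y ^ N)
    (α : ℝ) (hα : α < 0)
    (d₀ : ℝ) (hd₀ : d₀ ∈ Ioo 0 (Real.exp (-1 / δ))) :
    ∃ a : ℤ → ℝ, ∀ N : ℤ, n₀ ≤ N →
      (fun y : ℝ =>
          Real.exp (α / y) *
            (∫ s in Real.exp (-1 / y)..d₀, s ^ (α - 1) * R (-1 / Real.log s)) -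
          ∑ n ∈ Finset.Icc n₀ N, a n * y ^ n)
        =o[𝓝[>] 0] fun y : ℝ => y ^ N := by
  obtain ⟨hy₀, hy₀δ⟩ := neg_one_div_log_mem_Ioo hδ hd₀
  set y₀ := -1 / log d₀
  have hd₀y₀ : exp (-1 / y₀) = d₀ := by simp [y₀, exp_log hd₀.1]
  have hRcont' : ContinuousOn R (Ioc 0 y₀) := hRcont.mono fun t ht => ⟨ht.1, ht.2.trans_lt hy₀δ⟩
  set a := formalCoeff α r n₀
  refine ⟨a, fun N hN => ?_⟩
  set h := fun t => R t - ∑ n ∈ Finset.Icc n₀ N, r n * t ^ n + N * a N * t ^ (N + 1)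
  have hhcont : ContinuousOn h (Ioc 0 y₀) := by
    have : ∀ t ∈ Ioc 0 y₀, t ≠ 0 := fun t ht => ht.1.ne'
    fun_prop (disch := simp_all)
  have hh : h =o[𝓝[>] 0] (· ^ N) := (hexp N hN).add ((isLittleO_zpow_add_one N).const_mul_left _)
  refine ((isLittleO_exp_mul_integral hα hy₀ hhcont hh).sub
    ((isLittleO_exp_div_zpow hα N).const_mul_left
      (exp (-α / y₀) * ∑ n ∈ Finset.Icc n₀ N, a n * y₀ ^ n))).congr' ?_ EventuallyEq.rfl
  filter_upwards [Ioo_mem_nhdsGT hy₀] with y ⟨hy, hyy₀⟩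
  have hne : ∀ t ∈ Icc y y₀, t ≠ 0 := fun t ht => (hy.trans_le ht.1).ne'
  have hRy : ContinuousOn R (Icc y y₀) := hRcont'.mono fun t ht => ⟨hy.trans_le ht.1, ht.2⟩
  rw [← hd₀y₀, integral_rpow_mul_comp_neg_inv_log hy hyy₀.le hRy,
    exp_mul_integral_sub_eq hy hyy₀.le hRy (fun t ht => hasDerivAt_sum_zpow _ a (hne t ht))
      (by fun_prop (disch := simp_all))]
  congr 2
  refine integral_congr fun t ht => ?_
  rw [uIcc_of_le hyy₀.le] at ht
  simp only [h, formalCoeff_ode hα.ne r hN (hne t ht), a]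
  ring
end
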